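/- arXiv:2509.03454 — 6 statements merged into one kernel-verified Lean document; each statement's English description precedes it below -/
import Mathlib

section
/- Let r > -1/2 and p ≥ 1 be real numbers. The double series ∑_{ℓ=1}^∞ ∑_{m=-ℓ}^{ℓ} |m|^p · (2/(ℓ(ℓ+1)))^{(1+r)p} (sum over integers ℓ ≥ 1 and integers m with -ℓ ≤ m ≤ ℓ) converges if and only if p > 2/(1+2r). -/
open Finset Real


lemma sum_up (p : ℝ) (hp : 1 ≤ p) (ℓ : ℕ) :
    ∑ m ∈ Finset.Icc (-((ℓ : ℤ) + 1)) ((ℓ : ℤ) + 1), |(m : ℝ)| ^ p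
      ≤ 3 * ((ℓ:ℝ)+1) ^ (p+1) := by
  have hp0 : (0:ℝ) ≤ p := by linarith
  have hN : (0:ℝ) < (ℓ:ℝ)+1 := by positivity
  have h1 : ∑ m ∈ Finset.Icc (-((ℓ : ℤ) + 1)) ((ℓ : ℤ) + 1), |(m : ℝ)| ^ p
      ≤ ∑ _m ∈ Finset.Icc (-((ℓ : ℤ) + 1)) ((ℓ : ℤ) + 1), ((ℓ:ℝ)+1) ^ p := by
    apply Finset.sum_le_sum
    intro m hm
    simp only [Finset.mem_Icc] at hm
    apply Real.rpow_le_rpow (abs_nonneg _) _ hp0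
    rw [abs_le]
    constructor
    · have := hm.1; push_cast; exact_mod_cast this
    · have := hm.2; exact_mod_cast this
  rw [Finset.sum_const, Int.card_Icc] at h1
  have hcard : ((-((ℓ : ℤ) + 1)) |> fun a => (((ℓ : ℤ) + 1) + 1 - a).toNat) = 2*ℓ+3 := by
    simp; omega
  simp only at hcard
  rw [hcard] at h1
  refine h1.trans ?_
  rw [nsmul_eq_mul]
  have : ((ℓ:ℝ)+1) ^ (p+1) = ((ℓ:ℝ)+1) * ((ℓ:ℝ)+1) ^ p := by
    rw [Real.rpow_add hN, Real.rpow_one]; ring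
  rw [this]
  have h2 : ((2*ℓ+3 : ℕ) : ℝ) ≤ 3 * ((ℓ:ℝ)+1) := by push_cast; linarith
  have h3 : (0:ℝ) ≤ ((ℓ:ℝ)+1) ^ p := Real.rpow_nonneg hN.le p
  nlinarith [Real.rpow_nonneg hN.le p]

lemma sum_low (p : ℝ) (hp : 1 ≤ p) (ℓ : ℕ) :
    (((ℓ:ℝ)+1)/2) ^ (p+1)
      ≤ ∑ m ∈ Finset.Icc (-((ℓ : ℤ) + 1)) ((ℓ : ℤ) + 1), |(m : ℝ)| ^ p := by
  have hp0 : (0:ℝ) ≤ p := by linarith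
  have hN : (0:ℝ) < (ℓ:ℝ)+1 := by positivity
  set h : ℕ := (ℓ+1)/2 with hh
  have hsub : Finset.Icc ((h:ℤ)+1) ((ℓ:ℤ)+1) ⊆ Finset.Icc (-((ℓ : ℤ) + 1)) ((ℓ : ℤ) + 1) := by
    intro m hm
    simp only [Finset.mem_Icc] at hm ⊢
    omega
  have hmono : ∑ m ∈ Finset.Icc ((h:ℤ)+1) ((ℓ:ℤ)+1), |(m : ℝ)| ^ p
      ≤ ∑ m ∈ Finset.Icc (-((ℓ : ℤ) + 1)) ((ℓ : ℤ) + 1), |(m : ℝ)| ^ p := by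
    apply Finset.sum_le_sum_of_subset_of_nonneg hsub
    intro m _ _
    exact Real.rpow_nonneg (abs_nonneg _) p
  refine le_trans ?_ hmono
  have hterm : ∀ m ∈ Finset.Icc ((h:ℤ)+1) ((ℓ:ℤ)+1),
      (((ℓ:ℝ)+1)/2) ^ p ≤ |(m : ℝ)| ^ p := by
    intro m hm
    simp only [Finset.mem_Icc] at hm
    apply Real.rpow_le_rpow (by positivity) _ hp0
    have hm1 : (h:ℝ)+1 ≤ (m:ℝ) := by exact_mod_cast hm.1
    have hhalf : ((ℓ:ℝ)+1)/2 ≤ (h:ℝ)+1 := by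
      have hℓ : ℓ ≤ 2*h+1 := by omega
      have : (ℓ:ℝ) ≤ 2*(h:ℝ)+1 := by exact_mod_cast hℓ
      linarith
    have : ((ℓ:ℝ)+1)/2 ≤ (m:ℝ) := le_trans hhalf hm1
    calc ((ℓ:ℝ)+1)/2 ≤ (m:ℝ) := this
    _ ≤ |(m:ℝ)| := le_abs_self _
  have hlow : ∑ _m ∈ Finset.Icc ((h:ℤ)+1) ((ℓ:ℤ)+1), (((ℓ:ℝ)+1)/2) ^ p
      ≤ ∑ m ∈ Finset.Icc ((h:ℤ)+1) ((ℓ:ℤ)+1), |(m : ℝ)| ^ p :=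
    Finset.sum_le_sum hterm
  refine le_trans ?_ hlow
  rw [Finset.sum_const, Int.card_Icc, nsmul_eq_mul]
  have hcard : ((((ℓ:ℤ)+1) + 1 - ((h:ℤ)+1)).toNat : ℝ) = (ℓ:ℝ) + 1 - (h:ℝ) := by
    have : (((ℓ:ℤ)+1) + 1 - ((h:ℤ)+1)).toNat = ℓ + 1 - h := by omega
    rw [this]
    have hle : h ≤ ℓ + 1 := by omega
    push_cast [hle]
    ring
  rw [hcard]
  have hc : ((ℓ:ℝ)+1)/2 ≤ (ℓ:ℝ) + 1 - (h:ℝ) := by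
    have : (h:ℝ) ≤ ((ℓ:ℝ)+1)/2 := by
      have : 2*h ≤ ℓ+1 := by omega
      have := (by exact_mod_cast this : 2*(h:ℝ) ≤ (ℓ:ℝ)+1)
      linarith
    linarith
  have : (((ℓ:ℝ)+1)/2) ^ (p+1) = (((ℓ:ℝ)+1)/2) * (((ℓ:ℝ)+1)/2) ^ p := by
    rw [Real.rpow_add (by positivity), Real.rpow_one]; ring
  rw [this]
  have h3 : (0:ℝ) ≤ (((ℓ:ℝ)+1)/2) ^ p := Real.rpow_nonneg (by positivity) p
  nlinarith

/-- For real `r > -1/2` and `p ≥ 1`, the double series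
`∑_{ℓ=1}^∞ ∑_{m=-ℓ}^{ℓ} |m|^p · (2/(ℓ(ℓ+1)))^{(1+r)p}` converges iff `p > 2/(1+2r)`.
(The outer index `ℓ ≥ 1` is written as `ℓ+1` with `ℓ : ℕ`.) -/
theorem stmt_0 (r p : ℝ) (hr : r > -(1 / 2)) (hp : p ≥ 1) :
    Summable (fun ℓ : ℕ =>
      ∑ m ∈ Finset.Icc (-((ℓ : ℤ) + 1)) ((ℓ : ℤ) + 1),
        |(m : ℝ)| ^ p * (2 / (((ℓ : ℝ) + 1) * ((ℓ : ℝ) + 2))) ^ ((1 + r) * p))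
      ↔ p > 2 / (1 + 2 * r) := by
  set s : ℝ := (1+r)*p with hsdef
  have hs : 0 < s := mul_pos (by linarith) (by linarith)
  set e : ℝ := p + 1 - 2*s with hedef
  set f : ℕ → ℝ := fun ℓ =>
      ∑ m ∈ Finset.Icc (-((ℓ : ℤ) + 1)) ((ℓ : ℤ) + 1),
        |(m : ℝ)| ^ p * (2 / (((ℓ : ℝ) + 1) * ((ℓ : ℝ) + 2))) ^ ((1 + r) * p) with hfdef
  set g : ℕ → ℝ := fun ℓ => ((ℓ:ℝ)+1) ^ e with hgdef
  have hgnn : ∀ ℓ, 0 ≤ g ℓ := fun ℓ => Real.rpow_nonneg (by positivity) e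
  have hfnn : ∀ ℓ, 0 ≤ f ℓ := by
    intro ℓ
    apply Finset.sum_nonneg
    intro m _
    positivity
  -- rewrite f ℓ as (inner sum) * weight
  have hfeq : ∀ ℓ : ℕ, f ℓ = (∑ m ∈ Finset.Icc (-((ℓ : ℤ) + 1)) ((ℓ : ℤ) + 1), |(m : ℝ)| ^ p)
      * (2 / (((ℓ : ℝ) + 1) * ((ℓ : ℝ) + 2))) ^ s := by
    intro ℓ
    simp only [hfdef]
    rw [← Finset.sum_mul]
  -- weight bounds
  have hN : ∀ ℓ : ℕ, (0:ℝ) < (ℓ:ℝ)+1 := fun ℓ => by positivity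
  have hwlow : ∀ ℓ : ℕ, ((ℓ:ℝ)+1) ^ (-(2*s)) ≤ (2 / (((ℓ : ℝ) + 1) * ((ℓ : ℝ) + 2))) ^ s := by
    intro ℓ
    have h1 : (1:ℝ) / ((ℓ:ℝ)+1)^2 ≤ 2 / (((ℓ : ℝ) + 1) * ((ℓ : ℝ) + 2)) := by
      rw [div_le_div_iff₀ (by positivity) (by positivity)]
      nlinarith [hN ℓ]
    calc ((ℓ:ℝ)+1) ^ (-(2*s)) = ((1:ℝ) / ((ℓ:ℝ)+1)^2) ^ s := by
          rw [one_div, ← Real.rpow_natCast ((ℓ:ℝ)+1) 2, ← Real.rpow_neg (hN ℓ).le,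
            ← Real.rpow_mul (hN ℓ).le]
          norm_num
    _ ≤ _ := Real.rpow_le_rpow (by positivity) h1 hs.le
  have hwup : ∀ ℓ : ℕ, (2 / (((ℓ : ℝ) + 1) * ((ℓ : ℝ) + 2))) ^ s ≤ (2:ℝ)^s * ((ℓ:ℝ)+1) ^ (-(2*s)) := by
    intro ℓ
    have h1 : 2 / (((ℓ : ℝ) + 1) * ((ℓ : ℝ) + 2)) ≤ 2 / ((ℓ:ℝ)+1)^2 := by
      rw [div_le_div_iff₀ (by positivity) (by positivity)]
      nlinarith [hN ℓ]
    calc (2 / (((ℓ : ℝ) + 1) * ((ℓ : ℝ) + 2))) ^ s ≤ ((2:ℝ) / ((ℓ:ℝ)+1)^2) ^ s :=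
          Real.rpow_le_rpow (by positivity) h1 hs.le
    _ = (2:ℝ)^s * ((ℓ:ℝ)+1) ^ (-(2*s)) := by
          rw [Real.div_rpow (by norm_num) (by positivity), ← Real.rpow_natCast ((ℓ:ℝ)+1) 2,
            ← Real.rpow_mul (hN ℓ).le, div_eq_mul_inv, ← Real.rpow_neg (hN ℓ).le]
          norm_num
  -- bounds for f in terms of g
  have hfg_up : ∀ ℓ, f ℓ ≤ (3 * 2^s) * g ℓ := by
    intro ℓ
    rw [hfeq ℓ]
    have h1 := sum_up p hp ℓ
    have h2 := hwup ℓ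
    have hsnn : (0:ℝ) ≤ (∑ m ∈ Finset.Icc (-((ℓ : ℤ) + 1)) ((ℓ : ℤ) + 1), |(m : ℝ)| ^ p) :=
      Finset.sum_nonneg fun m _ => Real.rpow_nonneg (abs_nonneg _) p
    have hwnn : (0:ℝ) ≤ (2 / (((ℓ : ℝ) + 1) * ((ℓ : ℝ) + 2))) ^ s := Real.rpow_nonneg (by positivity) s
    calc (∑ m ∈ Finset.Icc (-((ℓ : ℤ) + 1)) ((ℓ : ℤ) + 1), |(m : ℝ)| ^ p)
        * (2 / (((ℓ : ℝ) + 1) * ((ℓ : ℝ) + 2))) ^ s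
        ≤ (3 * ((ℓ:ℝ)+1) ^ (p+1)) * ((2:ℝ)^s * ((ℓ:ℝ)+1) ^ (-(2*s))) := by
          apply mul_le_mul h1 h2 hwnn (by positivity)
    _ = (3 * 2^s) * (((ℓ:ℝ)+1) ^ (p+1) * ((ℓ:ℝ)+1) ^ (-(2*s))) := by ring
    _ = (3 * 2^s) * g ℓ := by
          simp only [hgdef]
          congr 1
          rw [← Real.rpow_add (hN ℓ)]
          have he : p + 1 + -(2*s) = e := by rw [hedef]; ring
          rw [he]

  have hfg_low : ∀ ℓ, ((1:ℝ)/2)^(p+1) * g ℓ ≤ f ℓ := by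
    intro ℓ
    rw [hfeq ℓ]
    have h1 := sum_low p hp ℓ
    have h2 := hwlow ℓ
    calc ((1:ℝ)/2)^(p+1) * g ℓ
        = (((ℓ:ℝ)+1)/2) ^ (p+1) * ((ℓ:ℝ)+1) ^ (-(2*s)) := by
          simp only [hgdef]
          rw [show ((ℓ:ℝ)+1)/2 = (1/2) * ((ℓ:ℝ)+1) by ring,
            Real.mul_rpow (by norm_num) (hN ℓ).le]
          rw [show ((1:ℝ)/2)^(p+1) * ((ℓ:ℝ)+1)^e
              = (1/2)^(p+1) * (((ℓ:ℝ)+1)^(p+1) * ((ℓ:ℝ)+1)^(-(2*s))) by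
            rw [← Real.rpow_add (hN ℓ)]
            have he : p + 1 + -(2*s) = e := by rw [hedef]; ring
            rw [he]]
          ring
    _ ≤ _ := by
          apply mul_le_mul h1 h2 (Real.rpow_nonneg (by positivity) _)
          exact Finset.sum_nonneg fun m _ => Real.rpow_nonneg (abs_nonneg _) p
  -- Summable f ↔ Summable g
  have hc1 : (0:ℝ) < ((1:ℝ)/2)^(p+1) := Real.rpow_pos_of_pos (by norm_num) _
  have hiff : Summable f ↔ Summable g := by
    constructor
    · intro hf
      have : Summable (fun ℓ => (((1:ℝ)/2)^(p+1))⁻¹ * f ℓ) := hf.mul_left _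
      apply Summable.of_nonneg_of_le hgnn _ this
      intro ℓ
      rw [le_inv_mul_iff₀ hc1]
      exact hfg_low ℓ
    · intro hg
      exact Summable.of_nonneg_of_le hfnn hfg_up (hg.mul_left _)
  rw [hiff]
  -- Summable g ↔ e < -1
  have hg2 : Summable g ↔ e < -1 := by
    rw [show g = (fun n : ℕ => (fun m : ℕ => (m:ℝ) ^ e) (n+1)) from funext fun n => by
      simp only [hgdef]; push_cast; ring_nf]
    rw [summable_nat_add_iff (f := fun m : ℕ => (m:ℝ) ^ e) 1, Real.summable_nat_rpow]
  rw [hg2]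
  -- arithmetic
  have h2r : (0:ℝ) < 1 + 2*r := by linarith
  rw [hedef, hsdef, gt_iff_lt, div_lt_iff₀ h2r]
  constructor <;> intro h <;> nlinarith
end

section
/- Let r > 0 and p ≥ 1 be real numbers. For each integer k ≥ 2 set a_k = ∑_{m=0}^{k} (k+1)·|2m-k|^p·(2/(k+2))^{(2r+1)p} + ∑_{m=1}^{k-1} (k+1)·|2m-k|^p·(2/k)^{(2r+1)p}. Then the series ∑_{k=2}^∞ a_k converges if and only if p > 3/(2r). -/
/-- For real `r > 0`, `p ≥ 1`, and for each integer `k ≥ 2`, setting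
`a_k = ∑_{m=0}^{k} (k+1)|2m-k|^p (2/(k+2))^{(2r+1)p} + ∑_{m=1}^{k-1} (k+1)|2m-k|^p (2/k)^{(2r+1)p}`,
the series `∑_{k=2}^∞ a_k` converges iff `p > 3/(2r)`.
(The index `k ≥ 2` is written as `k+2` with `k : ℕ`.) -/
theorem stmt_1 (r p : ℝ) (hr : r > 0) (hp : p ≥ 1) :
    Summable (fun k : ℕ =>
      (∑ m ∈ Finset.range (k + 3),
        ((k : ℝ) + 3) * |2 * (m : ℝ) - ((k : ℝ) + 2)| ^ p *
          (2 / ((k : ℝ) + 4)) ^ ((2 * r + 1) * p)) +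
      ∑ m ∈ Finset.Icc 1 (k + 1),
        ((k : ℝ) + 3) * |2 * (m : ℝ) - ((k : ℝ) + 2)| ^ p *
          (2 / ((k : ℝ) + 2)) ^ ((2 * r + 1) * p))
      ↔ p > 3 / (2 * r) := by
  have hp0 : (0:ℝ) ≤ p := le_trans zero_le_one hp
  set t : ℝ := (2 * r + 1) * p with ht
  have ht0 : (0:ℝ) ≤ t := mul_nonneg (by linarith) hp0
  set e : ℝ := 2 + p - t with he
  set a : ℕ → ℝ := fun k =>
      (∑ m ∈ Finset.range (k + 3),
        ((k : ℝ) + 3) * |2 * (m : ℝ) - ((k : ℝ) + 2)| ^ p *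
          (2 / ((k : ℝ) + 4)) ^ t) +
      ∑ m ∈ Finset.Icc 1 (k + 1),
        ((k : ℝ) + 3) * |2 * (m : ℝ) - ((k : ℝ) + 2)| ^ p *
          (2 / ((k : ℝ) + 2)) ^ t with ha_def
  set g : ℕ → ℝ := fun k => ((k:ℝ) + 2) ^ e with hg_def
  have hg0 : ∀ k, 0 ≤ g k := fun k => Real.rpow_nonneg (by positivity) _
  have ha0 : ∀ k, 0 ≤ a k := by
    intro k
    apply add_nonneg <;> apply Finset.sum_nonneg <;> intro m _ <;> positivity
  have hgsplit : ∀ k : ℕ, g k = ((k:ℝ)+2)^(2:ℕ) * ((k:ℝ)+2)^p / ((k:ℝ)+2)^t := by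
    intro k
    have hK : (0:ℝ) < (k:ℝ)+2 := by positivity
    show ((k:ℝ)+2)^e = _
    rw [he, Real.rpow_sub hK, Real.rpow_add hK,
      show ((2:ℝ) = ((2:ℕ):ℝ)) by norm_num, Real.rpow_natCast]
  -- ### Upper bound
  have hub : ∀ k, a k ≤ (8 * 2 ^ t) * g k := by
    intro k
    have hK : (0:ℝ) < (k:ℝ)+2 := by positivity
    have hKt : ((k:ℝ)+2)^t ≠ 0 := (Real.rpow_pos_of_pos hK t).ne'
    have hbound : ∀ m : ℕ, (m:ℝ) ≤ (k:ℝ)+2 →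
        |2 * (m : ℝ) - ((k : ℝ) + 2)| ≤ (k:ℝ)+2 := by
      intro m hm
      rw [abs_le]
      have : (0:ℝ) ≤ (m:ℝ) := Nat.cast_nonneg m
      constructor <;> linarith
    have h1 : ∀ m ∈ Finset.range (k+3),
        ((k : ℝ) + 3) * |2 * (m : ℝ) - ((k : ℝ) + 2)| ^ p * (2 / ((k : ℝ) + 4)) ^ t
        ≤ ((k:ℝ)+3) * ((k:ℝ)+2)^p * (2/((k:ℝ)+2))^t := by
      intro m hm
      have hm' : (m:ℝ) ≤ (k:ℝ) + 2 := by
        have : m ≤ k + 2 := by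
          have := Finset.mem_range.mp hm; omega
        exact_mod_cast this
      gcongr
      · exact hbound m hm'
      · linarith
    have h2 : ∀ m ∈ Finset.Icc 1 (k+1),
        ((k : ℝ) + 3) * |2 * (m : ℝ) - ((k : ℝ) + 2)| ^ p * (2 / ((k : ℝ) + 2)) ^ t
        ≤ ((k:ℝ)+3) * ((k:ℝ)+2)^p * (2/((k:ℝ)+2))^t := by
      intro m hm
      have hm' : (m:ℝ) ≤ (k:ℝ) + 2 := by
        have : m ≤ k + 2 := by
          have := (Finset.mem_Icc.mp hm).2; omega
        exact_mod_cast this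
      gcongr
      exact hbound m hm'
    have hA := Finset.sum_le_card_nsmul _ _ _ h1
    have hB := Finset.sum_le_card_nsmul _ _ _ h2
    rw [Finset.card_range] at hA
    rw [Nat.card_Icc] at hB
    have hA' : (∑ m ∈ Finset.range (k + 3),
        ((k : ℝ) + 3) * |2 * (m : ℝ) - ((k : ℝ) + 2)| ^ p * (2 / ((k : ℝ) + 4)) ^ t)
        ≤ ((k:ℝ)+3) * (((k:ℝ)+3) * ((k:ℝ)+2)^p * (2/((k:ℝ)+2))^t) := by
      refine le_trans hA ?_
      rw [nsmul_eq_mul]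
      push_cast
      exact le_of_eq (by ring)
    have hB' : (∑ m ∈ Finset.Icc 1 (k + 1),
        ((k : ℝ) + 3) * |2 * (m : ℝ) - ((k : ℝ) + 2)| ^ p * (2 / ((k : ℝ) + 2)) ^ t)
        ≤ ((k:ℝ)+3) * (((k:ℝ)+3) * ((k:ℝ)+2)^p * (2/((k:ℝ)+2))^t) := by
      refine le_trans hB ?_
      rw [nsmul_eq_mul]
      have hc : ((k + 1 + 1 - 1 : ℕ) : ℝ) ≤ (k:ℝ)+3 := by push_cast; norm_num
      have hpos : (0:ℝ) ≤ ((k:ℝ)+3) * ((k:ℝ)+2)^p * (2/((k:ℝ)+2))^t := by positivity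
      exact mul_le_mul_of_nonneg_right hc hpos
    have hkey : 2*((k:ℝ)+3)*((k:ℝ)+3) ≤ 8 * ((k:ℝ)+2)^(2:ℕ) := by
      have : (0:ℝ) ≤ (k:ℝ) := Nat.cast_nonneg k
      nlinarith
    have hfin : 2*((k:ℝ)+3)*(((k:ℝ)+3) * ((k:ℝ)+2)^p * (2/((k:ℝ)+2))^t)
        ≤ (8 * 2 ^ t) * g k := by
      calc 2*((k:ℝ)+3)*(((k:ℝ)+3) * ((k:ℝ)+2)^p * (2/((k:ℝ)+2))^t)
          = (2*((k:ℝ)+3)*((k:ℝ)+3)) * (((k:ℝ)+2)^p * (2/((k:ℝ)+2))^t) := by ring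
        _ ≤ (8 * ((k:ℝ)+2)^(2:ℕ)) * (((k:ℝ)+2)^p * (2/((k:ℝ)+2))^t) := by
            apply mul_le_mul_of_nonneg_right hkey
            positivity
        _ = (8 * 2 ^ t) * g k := by
            rw [hgsplit k, Real.div_rpow (by norm_num) hK.le]
            field_simp
    calc a k ≤ ((k:ℝ)+3) * (((k:ℝ)+3) * ((k:ℝ)+2)^p * (2/((k:ℝ)+2))^t)
        + ((k:ℝ)+3) * (((k:ℝ)+3) * ((k:ℝ)+2)^p * (2/((k:ℝ)+2))^t) := add_le_add hA' hB'
      _ = 2*((k:ℝ)+3)*(((k:ℝ)+3) * ((k:ℝ)+2)^p * (2/((k:ℝ)+2))^t) := by ring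
      _ ≤ (8 * 2 ^ t) * g k := hfin
  -- ### Lower bound
  have hlb : ∀ k, ((2:ℝ)^(-p)/4) * g k ≤ a k := by
    intro k
    have hK : (0:ℝ) < (k:ℝ)+2 := by positivity
    have hKt : ((k:ℝ)+2)^t ≠ 0 := (Real.rpow_pos_of_pos hK t).ne'
    have h2p : (2:ℝ)^p ≠ 0 := (Real.rpow_pos_of_pos two_pos p).ne'
    set q := (k+2)/4 with hq
    have hsub : Finset.range (q+1) ⊆ Finset.range (k+3) := by
      apply Finset.range_subset_range.mpr; omega
    have hterm : ∀ m ∈ Finset.range (q+1),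
        ((k:ℝ)+3) * (((k:ℝ)+2)/2)^p * (2/((k:ℝ)+4))^t
        ≤ ((k : ℝ) + 3) * |2 * (m : ℝ) - ((k : ℝ) + 2)| ^ p * (2 / ((k : ℝ) + 4)) ^ t := by
      intro m hm
      have hm4 : 4*m ≤ k+2 := by
        have := Finset.mem_range.mp hm; omega
      have hm' : 4*(m:ℝ) ≤ (k:ℝ)+2 := by exact_mod_cast hm4
      have habs : ((k:ℝ)+2)/2 ≤ |2 * (m : ℝ) - ((k : ℝ) + 2)| := by
        have h1 : ((k:ℝ)+2)/2 ≤ -(2*(m:ℝ) - ((k:ℝ)+2)) := by linarith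
        exact h1.trans (neg_le_abs _)
      gcongr
    have hsum1 : ((q+1 : ℕ):ℝ) * (((k:ℝ)+3) * (((k:ℝ)+2)/2)^p * (2/((k:ℝ)+4))^t)
        ≤ a k := by
      have hc := Finset.card_nsmul_le_sum _ _ _ hterm
      rw [Finset.card_range, nsmul_eq_mul] at hc
      have hmono : (∑ m ∈ Finset.range (q+1),
          ((k : ℝ) + 3) * |2 * (m : ℝ) - ((k : ℝ) + 2)| ^ p * (2 / ((k : ℝ) + 4)) ^ t)
          ≤ ∑ m ∈ Finset.range (k+3),
          ((k : ℝ) + 3) * |2 * (m : ℝ) - ((k : ℝ) + 2)| ^ p * (2 / ((k : ℝ) + 4)) ^ t := by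
        apply Finset.sum_le_sum_of_subset_of_nonneg hsub
        intro m _ _
        positivity
      have hBnn : (0:ℝ) ≤ ∑ m ∈ Finset.Icc 1 (k + 1),
          ((k : ℝ) + 3) * |2 * (m : ℝ) - ((k : ℝ) + 2)| ^ p * (2 / ((k : ℝ) + 2)) ^ t := by
        apply Finset.sum_nonneg
        intro m _
        positivity
      have := le_trans hc hmono
      simp only [ha_def]
      linarith
    have hcard : (((k:ℝ)+2)/4) ≤ ((q+1:ℕ):ℝ) := by
      have h4 : k+2 ≤ 4*q+4 := by omega
      have h4' : ((k:ℝ)+2) ≤ 4*(q:ℝ)+4 := by exact_mod_cast h4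
      push_cast
      linarith
    have hfin : ((2:ℝ)^(-p)/4) * g k
        ≤ ((q+1:ℕ):ℝ) * (((k:ℝ)+3) * (((k:ℝ)+2)/2)^p * (2/((k:ℝ)+4))^t) := by
      have hdd : (1:ℝ)/((k:ℝ)+2) ≤ 2/((k:ℝ)+4) := by
        rw [div_le_div_iff₀ hK (by positivity)]
        linarith
      calc ((2:ℝ)^(-p)/4) * g k
          = (((k:ℝ)+2)/4) * (((k:ℝ)+2) * ((((k:ℝ)+2)/2)^p * ((1:ℝ)/((k:ℝ)+2))^t)) := by
            rw [hgsplit k, Real.rpow_neg (by norm_num : (0:ℝ) ≤ 2),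
              Real.div_rpow hK.le (by norm_num : (0:ℝ) ≤ 2),
              Real.div_rpow zero_le_one hK.le, Real.one_rpow]
            field_simp
        _ ≤ ((q+1:ℕ):ℝ) * (((k:ℝ)+3) * ((((k:ℝ)+2)/2)^p * (2/((k:ℝ)+4))^t)) := by
            gcongr
            linarith
        _ = ((q+1:ℕ):ℝ) * (((k:ℝ)+3) * (((k:ℝ)+2)/2)^p * (2/((k:ℝ)+4))^t) := by ring
    linarith [hsum1, hfin]
  -- ### summability of g
  have hgsum : Summable g ↔ e < -1 := by
    have hgeq : g = fun n : ℕ => ((fun m : ℕ => (m:ℝ)^e) (n+2)) := by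
      funext n
      simp only [hg_def]
      push_cast
      ring_nf
    rw [hgeq, summable_nat_add_iff (f := fun m : ℕ => (m:ℝ)^e) 2, Real.summable_nat_rpow]
  -- ### conclusion
  have key : Summable a ↔ e < -1 := by
    constructor
    · intro h
      rw [← hgsum]
      have hc : (0:ℝ) < (2:ℝ)^(-p)/4 := by positivity
      apply Summable.of_nonneg_of_le hg0 (fun k => ?_) (h.mul_left ((2:ℝ)^(-p)/4)⁻¹)
      rw [inv_mul_eq_div, le_div_iff₀ hc]
      linarith [hlb k]
    · intro hel
      exact Summable.of_nonneg_of_le ha0 hub ((hgsum.mpr hel).mul_left _)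
  have hiff : e < -1 ↔ p > 3 / (2 * r) := by
    have h2r : (0:ℝ) < 2*r := by linarith
    rw [he, ht, gt_iff_lt, div_lt_iff₀ h2r]
    constructor
    · intro hh; nlinarith
    · intro hh; nlinarith
  exact key.trans hiff
end

section
/- Fix a real number ε with 0 < ε < √2. For each integer ℓ ≥ 1 let N(ℓ) be the number of integers m with -ℓ ≤ m ≤ ℓ and |m|·√(2/(ℓ(ℓ+1))) > ε, and set ϱ(ℓ, ε) = N(ℓ)/(2ℓ). Then ϱ(ℓ, ε) tends to 1 - ε/√2 as ℓ → ∞. -/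
/-! The condition `ε < |m| · √(2/(ℓ(ℓ+1)))` reads `t_ℓ < |m|` with `t_ℓ = (ε/√2)·√(ℓ(ℓ+1))`.
Since `ε < √2` we have `0 ≤ t_ℓ < ℓ + 1`, so exactly the `2⌊t_ℓ⌋ + 1` integers with `|m| ≤ ⌊t_ℓ⌋`
are excluded from `[-ℓ, ℓ]`, and `ϱ(ℓ, ε) = 1 - ⌊t_ℓ⌋/ℓ`. Finally `√(ℓ(ℓ+1)) / ℓ → 1`, whence
`⌊t_ℓ⌋/ℓ → ε/√2`. -/

open Filter Topology

lemma Int.ncard_setOf_lt_abs {k n : ℤ} (hk : 0 ≤ k) (hkn : k ≤ n) :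
    ({m : ℤ | -n ≤ m ∧ m ≤ n ∧ k < |m|}.ncard : ℤ) = 2 * (n - k) := by
  have hset : {m : ℤ | -n ≤ m ∧ m ≤ n ∧ k < |m|} = ↑(Finset.Icc (-n) n \ Finset.Icc (-k) k) := by
    ext m
    simp only [Set.mem_ofPred_eq, Finset.coe_sdiff, Finset.coe_Icc, Set.mem_sdiff, Set.mem_Icc,
      ← abs_le (b := k), not_le, and_assoc]
  rw [hset, Set.ncard_coe_finset,
    Finset.card_sdiff_of_subset (Finset.Icc_subset_Icc (by omega) (by omega)),
    Int.card_Icc, Int.card_Icc]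
  omega

lemma Int.ncard_setOf_real_lt_abs (n : ℕ) {t : ℝ} (ht : 0 ≤ t) (htn : t < n + 1) :
    ({m : ℤ | -(n : ℤ) ≤ m ∧ m ≤ n ∧ t < |(m : ℝ)|}.ncard : ℝ) = 2 * n - 2 * ⌊t⌋ := by
  have hfloor_le : ⌊t⌋ ≤ n := Int.lt_add_one_iff.mp (Int.floor_lt.mpr (by exact_mod_cast htn))
  have hset : {m : ℤ | -(n : ℤ) ≤ m ∧ m ≤ n ∧ t < |(m : ℝ)|}
      = {m : ℤ | -(n : ℤ) ≤ m ∧ m ≤ n ∧ ⌊t⌋ < |m|} := by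
    ext m
    simp only [Set.mem_ofPred_eq, Int.floor_lt, Int.cast_abs]
  have hcount := Int.ncard_setOf_lt_abs (Int.floor_nonneg.mpr ht) hfloor_le
  rw [hset]
  exact_mod_cast (by rw [hcount]; ring : _ = (2 * n - 2 * ⌊t⌋ : ℤ))

lemma tendsto_floor_div_of_tendsto_div {ι : Type*} {l : Filter ι} {f g : ι → ℝ} {c : ℝ}
    (hg : Tendsto g l atTop) (hfg : Tendsto (fun i => f i / g i) l (𝓝 c)) :
    Tendsto (fun i => (⌊f i⌋ : ℝ) / g i) l (𝓝 c) := by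
  have hlower : Tendsto (fun i => f i / g i - 1 / g i) l (𝓝 c) := by
    have hinv : Tendsto (fun i => 1 / g i) l (𝓝 0) := by
      simpa only [one_div, Pi.inv_def] using hg.inv_tendsto_atTop
    simpa using hfg.sub hinv
  refine tendsto_of_tendsto_of_tendsto_of_le_of_le' hlower hfg ?_ ?_ <;>
    filter_upwards [hg.eventually_gt_atTop 0] with i hi
  · rw [← sub_div]
    gcongr
    exact (Int.sub_one_lt_floor _).le
  · gcongr
    exact Int.floor_le _

lemma Real.sqrt_mul_add_one_lt {x : ℝ} (hx : 0 ≤ x) : √(x * (x + 1)) < x + 1 :=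
  (Real.sqrt_lt' (by linarith)).mpr (by nlinarith)

lemma tendsto_sqrt_mul_succ_div_atTop :
    Tendsto (fun n : ℕ => √(n * (n + 1)) / n) atTop (𝓝 1) := by
  have hupper : Tendsto (fun n : ℕ => 1 + 1 / (n : ℝ)) atTop (𝓝 1) := by
    simpa using tendsto_one_div_atTop_nhds_zero_nat.const_add (1 : ℝ)
  refine tendsto_of_tendsto_of_tendsto_of_le_of_le' tendsto_const_nhds hupper ?_ ?_ <;>
    filter_upwards [eventually_gt_atTop 0] with n hn <;>
    have hn' : (0 : ℝ) < n := by exact_mod_cast hn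
  · rw [le_div_iff₀ hn', one_mul]
    exact (Real.le_sqrt hn'.le (by positivity)).mpr (by nlinarith)
  · rw [one_add_div hn'.ne']
    gcongr
    exact (Real.sqrt_mul_add_one_lt hn'.le).le

/-- Fix `0 < ε < √2`. For each `ℓ ≥ 1` let `N(ℓ)` be the number of integers `m`
with `-ℓ ≤ m ≤ ℓ` and `|m|·√(2/(ℓ(ℓ+1))) > ε`, and `ϱ(ℓ,ε) = N(ℓ)/(2ℓ)`. Then
`ϱ(ℓ,ε) → 1 - ε/√2` as `ℓ → ∞`. -/
theorem stmt_6 (ε : ℝ) (hε0 : 0 < ε) (hε2 : ε < Real.sqrt 2) :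
    Filter.Tendsto (fun ℓ : ℕ =>
      (({m : ℤ | -(ℓ : ℤ) ≤ m ∧ m ≤ (ℓ : ℤ) ∧
          ε < |(m : ℝ)| * Real.sqrt (2 / ((ℓ : ℝ) * ((ℓ : ℝ) + 1)))}.ncard : ℝ))
        / (2 * (ℓ : ℝ)))
      Filter.atTop (nhds (1 - ε / Real.sqrt 2)) := by
  set t : ℕ → ℝ := fun ℓ => ε / √2 * √(ℓ * (ℓ + 1)) with ht
  have hratio : ∀ᶠ ℓ : ℕ in atTop, 1 - (⌊t ℓ⌋ : ℝ) / ℓ =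
      ({m : ℤ | -(ℓ : ℤ) ≤ m ∧ m ≤ (ℓ : ℤ) ∧
          ε < |(m : ℝ)| * √(2 / ((ℓ : ℝ) * ((ℓ : ℝ) + 1)))}.ncard : ℝ) / (2 * ℓ) := by
    filter_upwards [eventually_gt_atTop 0] with ℓ hℓ
    have hℓ' : (0 : ℝ) < ℓ := by exact_mod_cast hℓ
    have hr : 0 < √(2 / ((ℓ : ℝ) * (ℓ + 1))) := by positivity
    have hthreshold : ε / √(2 / ((ℓ : ℝ) * (ℓ + 1))) = t ℓ := by
      rw [Real.sqrt_div zero_le_two, div_div_eq_mul_div, mul_div_right_comm]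
    have hcoeff : ε / √2 ≤ 1 := ((div_lt_one (by positivity)).mpr hε2).le
    have htℓ : t ℓ < ℓ + 1 :=
      (mul_le_of_le_one_left (Real.sqrt_nonneg _) hcoeff).trans_lt (Real.sqrt_mul_add_one_lt hℓ'.le)
    simp_rw [← div_lt_iff₀ hr, hthreshold]
    rw [Int.ncard_setOf_real_lt_abs ℓ (by positivity) htℓ]
    field_simp
  have hlim : Tendsto (fun ℓ : ℕ => t ℓ / ℓ) atTop (𝓝 (ε / √2)) := by
    simpa [ht, mul_div_assoc] using tendsto_sqrt_mul_succ_div_atTop.const_mul (ε / √2)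
  exact (tendsto_const_nhds.sub
    (tendsto_floor_div_of_tendsto_div tendsto_natCast_atTop_atTop hlim)).congr' hratio
end

section
/- For all integers k ≥ 0 and 0 ≤ m ≤ k and all complex parameters z₁, z₂ ∈ ℂ, the function F_k^m : ℝ⁴ → ℂ is harmonic on ℝ⁴; that is, the sum of its four second partial derivatives vanishes identically: ∂²F_k^m/∂x² + ∂²F_k^m/∂y² + ∂²F_k^m/∂z² + ∂²F_k^m/∂w² = 0. -/
/-- The polynomial `F_k^m(x,y,z,w) = (αz₁+βz₂)^m (-conj(β)z₁+conj(α)z₂)^{k-m}` where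
`α = x+iy`, `β = z+iw`, with the convention that `F_k^m = 0` unless `0 ≤ m ≤ k`. -/
noncomputable def Fkm (k : ℕ) (m : ℤ) (z₁ z₂ : ℂ) (p : Fin 4 → ℝ) : ℂ :=
  if 0 ≤ m ∧ m ≤ (k : ℤ) then
    (((p 0 : ℂ) + (p 1 : ℂ) * Complex.I) * z₁ +
        ((p 2 : ℂ) + (p 3 : ℂ) * Complex.I) * z₂) ^ m.toNat *
      ((-(starRingEnd ℂ) ((p 2 : ℂ) + (p 3 : ℂ) * Complex.I)) * z₁ +
        (starRingEnd ℂ) ((p 0 : ℂ) + (p 1 : ℂ) * Complex.I) * z₂) ^ (k - m.toNat)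
  else 0

/-!
Write `F_k^m = A ^ m * B ^ (k - m)` with the real-linear maps `A = α z₁ + β z₂` and
`B = -conj β z₁ + conj α z₂`. The pure second partial of `A ^ n * B ^ r` along `e` is a
combination of `(A e)²`, `A e * B e` and `(B e)²` whose coefficients do not depend on `e`, so the
Laplacian vanishes because the three sums `∑ (A eᵢ)²`, `∑ A eᵢ B eᵢ`, `∑ (B eᵢ)²` over the standard
basis do: `A` and `B` span an isotropic plane of the complex-bilinear extension of the Euclidean
form.
-/

open Complex ContinuousLinearMap ComplexConjugate

section PowMulPow

variable {𝕜 𝔸 E : Type*} [NontriviallyNormedField 𝕜] [NormedCommRing 𝔸] [NormedAlgebra 𝕜 𝔸]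
  [NormedAddCommGroup E] [NormedSpace 𝕜 E] (A B : E →L[𝕜] 𝔸) (n r : ℕ)

theorem hasFDerivAt_pow_mul_pow (q : E) :
    HasFDerivAt (fun x => A x ^ n * B x ^ r)
      ((n * A q ^ (n - 1) * B q ^ r) • A + (r * A q ^ n * B q ^ (r - 1)) • B) q := by
  refine ((A.hasFDerivAt.pow n).mul (B.hasFDerivAt.pow r)).congr_fderiv ?_
  module

theorem fderiv_pow_mul_pow_apply (q e : E) :
    fderiv 𝕜 (fun x => A x ^ n * B x ^ r) q e =
      (n * A e) * (A q ^ (n - 1) * B q ^ r) + (r * B e) * (A q ^ n * B q ^ (r - 1)) := by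
  rw [(hasFDerivAt_pow_mul_pow A B n r q).fderiv]
  simp only [add_apply, smul_apply, smul_eq_mul]
  ring

theorem fderiv_fderiv_pow_mul_pow_apply (p e : E) :
    fderiv 𝕜 (fun q => fderiv 𝕜 (fun x => A x ^ n * B x ^ r) q e) p e =
      (n * (n - 1 : ℕ) * A p ^ (n - 2) * B p ^ r) * A e ^ 2 +
        (2 * n * r * A p ^ (n - 1) * B p ^ (r - 1)) * (A e * B e) +
        (r * (r - 1 : ℕ) * A p ^ n * B p ^ (r - 2)) * B e ^ 2 := by
  simp_rw [fderiv_pow_mul_pow_apply]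
  have hderiv : HasFDerivAt (fun q =>
      (n * A e) * (A q ^ (n - 1) * B q ^ r) + (r * B e) * (A q ^ n * B q ^ (r - 1))) _ p :=
    ((hasFDerivAt_pow_mul_pow A B (n - 1) r p).const_mul _).add
      ((hasFDerivAt_pow_mul_pow A B n (r - 1) p).const_mul _)
  rw [hderiv.fderiv]
  simp only [add_apply, smul_apply, smul_eq_mul, Nat.sub_sub]
  ring

theorem sum_fderiv_fderiv_pow_mul_pow_eq_zero {ι : Type*} (s : Finset ι) (e : ι → E)
    (hAA : ∑ i ∈ s, A (e i) ^ 2 = 0) (hAB : ∑ i ∈ s, A (e i) * B (e i) = 0)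
    (hBB : ∑ i ∈ s, B (e i) ^ 2 = 0) (p : E) :
    ∑ i ∈ s, fderiv 𝕜 (fun q => fderiv 𝕜 (fun x => A x ^ n * B x ^ r) q (e i)) p (e i) = 0 := by
  simp only [fderiv_fderiv_pow_mul_pow_apply, Finset.sum_add_distrib, ← Finset.mul_sum, hAA, hAB,
    hBB, mul_zero, add_zero]

end PowMulPow

namespace Fkm

noncomputable def alpha : (Fin 4 → ℝ) →L[ℝ] ℂ :=
  ofRealCLM.comp (proj 0) + I • ofRealCLM.comp (proj 1)

noncomputable def beta : (Fin 4 → ℝ) →L[ℝ] ℂ :=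
  ofRealCLM.comp (proj 2) + I • ofRealCLM.comp (proj 3)

noncomputable def firstFactor (z₁ z₂ : ℂ) : (Fin 4 → ℝ) →L[ℝ] ℂ :=
  z₁ • alpha + z₂ • beta

noncomputable def secondFactor (z₁ z₂ : ℂ) : (Fin 4 → ℝ) →L[ℝ] ℂ :=
  z₂ • (conjCLE : ℂ →L[ℝ] ℂ).comp alpha - z₁ • (conjCLE : ℂ →L[ℝ] ℂ).comp beta

theorem alpha_apply (p : Fin 4 → ℝ) : alpha p = p 0 + p 1 * I := by
  simp [alpha, mul_comm]

theorem beta_apply (p : Fin 4 → ℝ) : beta p = p 2 + p 3 * I := by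
  simp [beta, mul_comm]

theorem firstFactor_apply (z₁ z₂ : ℂ) (p : Fin 4 → ℝ) :
    firstFactor z₁ z₂ p = alpha p * z₁ + beta p * z₂ := by
  simp [firstFactor, mul_comm]

theorem secondFactor_apply (z₁ z₂ : ℂ) (p : Fin 4 → ℝ) :
    secondFactor z₁ z₂ p = -conj (beta p) * z₁ + conj (alpha p) * z₂ := by
  simp [secondFactor, sub_eq_neg_add, mul_comm]

theorem eq_pow_mul_pow {k : ℕ} {m : ℤ} (hm0 : 0 ≤ m) (hmk : m ≤ k) (z₁ z₂ : ℂ) :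
    Fkm k m z₁ z₂ =
      fun p => firstFactor z₁ z₂ p ^ m.toNat * secondFactor z₁ z₂ p ^ (k - m.toNat) := by
  funext p
  rw [Fkm, if_pos ⟨hm0, hmk⟩, firstFactor_apply, secondFactor_apply, alpha_apply, beta_apply]

theorem sum_alpha_beta_single (f : ℂ → ℂ → ℂ) :
    ∑ i : Fin 4, f (alpha (Pi.single i 1)) (beta (Pi.single i 1)) =
      f 1 0 + f I 0 + f 0 1 + f 0 I := by
  simp [Fin.sum_univ_four, alpha_apply, beta_apply]

theorem sum_firstFactor_sq (z₁ z₂ : ℂ) :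
    ∑ i : Fin 4, firstFactor z₁ z₂ (Pi.single i 1) ^ 2 = 0 := by
  refine (sum_alpha_beta_single fun a b => (z₁ * a + z₂ * b) ^ 2).trans ?_
  linear_combination (z₁ ^ 2 + z₂ ^ 2) * I_sq

theorem sum_firstFactor_mul_secondFactor (z₁ z₂ : ℂ) :
    ∑ i : Fin 4, firstFactor z₁ z₂ (Pi.single i 1) * secondFactor z₁ z₂ (Pi.single i 1) = 0 := by
  refine (sum_alpha_beta_single fun a b =>
    (z₁ * a + z₂ * b) * (z₂ * conj a - z₁ * conj b)).trans ?_
  simp only [map_zero, map_one, conj_I]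
  ring

theorem sum_secondFactor_sq (z₁ z₂ : ℂ) :
    ∑ i : Fin 4, secondFactor z₁ z₂ (Pi.single i 1) ^ 2 = 0 := by
  refine (sum_alpha_beta_single fun a b => (z₂ * conj a - z₁ * conj b) ^ 2).trans ?_
  simp only [map_zero, map_one, conj_I]
  linear_combination (z₁ ^ 2 + z₂ ^ 2) * I_sq

end Fkm

/-- `F_k^m` is harmonic on `ℝ⁴`: the sum of its four pure second partial
derivatives vanishes identically. -/
theorem stmt_8 (k : ℕ) (m : ℤ) (hm0 : 0 ≤ m) (hmk : m ≤ (k : ℤ)) (z₁ z₂ : ℂ)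
    (p : Fin 4 → ℝ) :
    ∑ i : Fin 4,
      fderiv ℝ (fun q => fderiv ℝ (Fkm k m z₁ z₂) q (Pi.single i (1 : ℝ))) p
        (Pi.single i (1 : ℝ)) = 0 := by
  rw [Fkm.eq_pow_mul_pow hm0 hmk]
  exact sum_fderiv_fderiv_pow_mul_pow_eq_zero _ _ _ _ _ _ (Fkm.sum_firstFactor_sq z₁ z₂)
    (Fkm.sum_firstFactor_mul_secondFactor z₁ z₂) (Fkm.sum_secondFactor_sq z₁ z₂) p
end

section
/- For all integers k ≥ 0 and 0 ≤ m ≤ k and all complex parameters z₁, z₂ ∈ ℂ, the directional derivative of F_k^m along the vector field e₁ satisfies (∇_{e₁} F_k^m)(p) = i(2m-k)·F_k^m(p) for every p ∈ ℝ⁴. -/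
/-- The Hopf vector field `e₁(x,y,z,w) = (-y, x, -w, z)` on `ℝ⁴`. -/
def hopfE1 (p : Fin 4 → ℝ) : Fin 4 → ℝ := ![-p 1, p 0, -p 3, p 2]

/-! Along `e₁` the Hopf coordinates rotate as `(α, β) ↦ (iα, iβ)`, so `αz₁ + βz₂` has
`e₁`-eigenvalue `i` and `-β̄z₁ + ᾱz₂` has eigenvalue `-i`. The directional derivative along a
fixed vector obeys the Leibniz rule, so eigenvalues add under products and
`F_k^m = (αz₁ + βz₂)^m (-β̄z₁ + ᾱz₂)^{k-m}` has eigenvalue `i m - i (k - m)`. -/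

section Eigen

variable {E : Type*} [NormedAddCommGroup E] [NormedSpace ℝ E] {f g : E → ℂ} {x v : E} {a b : ℂ}

theorem fderiv_mul_apply_eq_of_apply_eq (hf : DifferentiableAt ℝ f x)
    (hg : DifferentiableAt ℝ g x) (hfv : fderiv ℝ f x v = a * f x)
    (hgv : fderiv ℝ g x v = b * g x) :
    fderiv ℝ (fun y => f y * g y) x v = (a + b) * (f x * g x) := by
  rw [fderiv_fun_mul hf hg]
  simp only [add_apply, smul_apply, smul_eq_mul, hfv, hgv]
  ring

theorem fderiv_pow_apply_eq_of_apply_eq (hf : DifferentiableAt ℝ f x)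
    (hfv : fderiv ℝ f x v = a * f x) (n : ℕ) :
    fderiv ℝ (fun y => f y ^ n) x v = n * a * f x ^ n := by
  rw [fderiv_fun_pow n hf]
  rcases n with _ | n
  · simp
  · simp only [smul_apply, nsmul_eq_mul, smul_eq_mul, hfv]
    push_cast
    ring

end Eigen

namespace Hopf

open ContinuousLinearMap Complex

noncomputable def alpha : (Fin 4 → ℝ) →L[ℝ] ℂ := (proj 0).smulRight 1 + (proj 1).smulRight I

noncomputable def beta : (Fin 4 → ℝ) →L[ℝ] ℂ := (proj 2).smulRight 1 + (proj 3).smulRight I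

theorem alpha_apply (p : Fin 4 → ℝ) : alpha p = p 0 + p 1 * I := by
  simp [alpha]

theorem beta_apply (p : Fin 4 → ℝ) : beta p = p 2 + p 3 * I := by
  simp [beta]

theorem alpha_hopfE1 (p : Fin 4 → ℝ) : alpha (hopfE1 p) = I * alpha p := by
  simp only [alpha_apply, hopfE1, Matrix.cons_val, ofReal_neg]
  ring_nf
  simp only [I_sq]
  ring

theorem beta_hopfE1 (p : Fin 4 → ℝ) : beta (hopfE1 p) = I * beta p := by
  simp only [beta_apply, hopfE1, Matrix.cons_val, ofReal_neg]
  ring_nf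
  simp only [I_sq]
  ring

noncomputable def first (z₁ z₂ : ℂ) : (Fin 4 → ℝ) →L[ℝ] ℂ := z₁ • alpha + z₂ • beta

/-- `-β̄z₁ + ᾱz₂`. -/
noncomputable def second (z₁ z₂ : ℂ) : (Fin 4 → ℝ) →L[ℝ] ℂ :=
  z₂ • (conjCLE.toContinuousLinearMap ∘L alpha) - z₁ • (conjCLE.toContinuousLinearMap ∘L beta)

theorem first_hopfE1 (z₁ z₂ : ℂ) (p : Fin 4 → ℝ) :
    first z₁ z₂ (hopfE1 p) = I * first z₁ z₂ p := by
  simp only [first, add_apply, smul_apply, smul_eq_mul, alpha_hopfE1, beta_hopfE1]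
  ring

theorem second_hopfE1 (z₁ z₂ : ℂ) (p : Fin 4 → ℝ) :
    second z₁ z₂ (hopfE1 p) = -I * second z₁ z₂ p := by
  simp only [second, sub_apply, smul_apply, smul_eq_mul, comp_apply,
    ContinuousLinearEquiv.coe_coe, conjCLE_apply, alpha_hopfE1, beta_hopfE1, map_mul, conj_I]
  ring

theorem Fkm_eq {k : ℕ} {m : ℤ} (hm0 : 0 ≤ m) (hmk : m ≤ k) (z₁ z₂ : ℂ) :
    Fkm k m z₁ z₂ = fun p => first z₁ z₂ p ^ m.toNat * second z₁ z₂ p ^ (k - m.toNat) := by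
  funext p
  simp only [Fkm, hm0, hmk, and_self, if_true, first, second, add_apply, sub_apply, smul_apply,
    smul_eq_mul, comp_apply, ContinuousLinearEquiv.coe_coe, conjCLE_apply, alpha_apply, beta_apply]
  ring

end Hopf

open Hopf in
/-- the directional derivative of `F_k^m` along `e₁` satisfies
`∇_{e₁} F_k^m = i(2m-k)·F_k^m` everywhere on `ℝ⁴`. -/
theorem stmt_9 (k : ℕ) (m : ℤ) (hm0 : 0 ≤ m) (hmk : m ≤ (k : ℤ)) (z₁ z₂ : ℂ)
    (p : Fin 4 → ℝ) :
    fderiv ℝ (Fkm k m z₁ z₂) p (hopfE1 p)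
      = Complex.I * (2 * (m : ℂ) - (k : ℂ)) * Fkm k m z₁ z₂ p := by
  have hA := fderiv_pow_apply_eq_of_apply_eq (x := p) (first z₁ z₂).differentiableAt
    (by rw [ContinuousLinearMap.fderiv, first_hopfE1 z₁ z₂ p]) m.toNat
  have hB := fderiv_pow_apply_eq_of_apply_eq (x := p) (second z₁ z₂).differentiableAt
    (by rw [ContinuousLinearMap.fderiv, second_hopfE1 z₁ z₂ p]) (k - m.toNat)
  rw [Fkm_eq hm0 hmk, fderiv_mul_apply_eq_of_apply_eq (by fun_prop) (by fun_prop) hA hB]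
  have hm : ((m.toNat : ℕ) : ℂ) = m := by exact_mod_cast Int.toNat_of_nonneg hm0
  have hkm : ((k - m.toNat : ℕ) : ℂ) = k - m := by
    rw [Nat.cast_sub (by omega), hm]
  rw [hm, hkm]
  ring
end

section
/- For all integers k ≥ 0 and 0 ≤ m ≤ k and all complex parameters z₁, z₂ ∈ ℂ, the directional derivatives of F_k^m along the vector fields e₂ and e₃ satisfy, identically on ℝ⁴: ∇_{e₂} F_k^m = m·F_k^{m-1} - (k-m)·F_k^{m+1} and ∇_{e₃} F_k^m = i m·F_k^{m-1} + i(k-m)·F_k^{m+1}, with the convention that F_k^{-1} = 0 and F_k^{k+1} = 0. -/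
/-- The vector field `e₂(x,y,z,w) = (-z, w, x, -y)` on `ℝ⁴`. -/
def fieldE2 (p : Fin 4 → ℝ) : Fin 4 → ℝ := ![-p 2, p 3, p 0, -p 1]

/-- The vector field `e₃(x,y,z,w) = (-w, -z, y, x)` on `ℝ⁴`. -/
def fieldE3 (p : Fin 4 → ℝ) : Fin 4 → ℝ := ![-p 3, -p 2, p 1, p 0]

/-!
Write `A = αz₁ + βz₂` and `B = -conj(β)z₁ + conj(α)z₂`, both ℝ-linear forms on `ℝ⁴`, so that
`F_k^m = A^m B^(k-m)`. Evaluated on the fields, `A ∘ e₂ = B`, `B ∘ e₂ = -A`, `A ∘ e₃ = iB` and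
`B ∘ e₃ = iA`. So by the Leibniz rule, differentiating `A^m B^(k-m)` along `e₂` or `e₃` moves one
power from one factor to the other, which is exactly the shift `m ↦ m ∓ 1`.
-/

open Complex ComplexConjugate ContinuousLinearMap

section PowMulPow

variable {𝕜 E 𝔸 : Type*} [NontriviallyNormedField 𝕜] [NormedAddCommGroup E] [NormedSpace 𝕜 E]
  [NormedCommRing 𝔸] [NormedAlgebra 𝕜 𝔸]

theorem fderiv_clm_pow_mul_clm_pow_apply (L M : E →L[𝕜] 𝔸) (a b : ℕ) (p v : E) :
    fderiv 𝕜 (fun q => L q ^ a * M q ^ b) p v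
      = a * L p ^ (a - 1) * L v * M p ^ b + b * L p ^ a * M p ^ (b - 1) * M v := by
  have h : HasFDerivAt (fun q => L q ^ a * M q ^ b) _ p :=
    (L.hasFDerivAt.pow a).mul (M.hasFDerivAt.pow b)
  rw [h.fderiv]
  simp only [add_apply, smul_apply, smul_eq_mul, nsmul_eq_mul]
  ring

theorem fderiv_clm_pow_mul_clm_pow_apply_of_swap (L M : E →L[𝕜] 𝔸) (a b : ℕ) (p v : E)
    (c₁ c₂ : 𝔸) (hL : L v = c₁ * M p) (hM : M v = c₂ * L p) :
    fderiv 𝕜 (fun q => L q ^ a * M q ^ b) p v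
      = c₁ * a * (L p ^ (a - 1) * M p ^ (b + 1)) + c₂ * b * (L p ^ (a + 1) * M p ^ (b - 1)) := by
  rw [fderiv_clm_pow_mul_clm_pow_apply, hL, hM, pow_succ (M p), pow_succ (L p)]
  ring

end PowMulPow

noncomputable def coordAlpha : (Fin 4 → ℝ) →L[ℝ] ℂ :=
  ofRealCLM.comp (proj 0) + I • ofRealCLM.comp (proj 1)

noncomputable def coordBeta : (Fin 4 → ℝ) →L[ℝ] ℂ :=
  ofRealCLM.comp (proj 2) + I • ofRealCLM.comp (proj 3)

@[simp] lemma coordAlpha_apply (p : Fin 4 → ℝ) : coordAlpha p = p 0 + p 1 * I := by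
  simp [coordAlpha, mul_comm]

@[simp] lemma coordBeta_apply (p : Fin 4 → ℝ) : coordBeta p = p 2 + p 3 * I := by
  simp [coordBeta, mul_comm]

noncomputable def formA (z₁ z₂ : ℂ) : (Fin 4 → ℝ) →L[ℝ] ℂ :=
  z₁ • coordAlpha + z₂ • coordBeta

noncomputable def formB (z₁ z₂ : ℂ) : (Fin 4 → ℝ) →L[ℝ] ℂ :=
  (-z₁) • (conjCLE : ℂ →L[ℝ] ℂ).comp coordBeta + z₂ • (conjCLE : ℂ →L[ℝ] ℂ).comp coordAlpha

lemma formA_apply (z₁ z₂ : ℂ) (p : Fin 4 → ℝ) :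
    formA z₁ z₂ p = coordAlpha p * z₁ + coordBeta p * z₂ := by
  simp [formA, mul_comm]

lemma formB_apply (z₁ z₂ : ℂ) (p : Fin 4 → ℝ) :
    formB z₁ z₂ p = -conj (coordBeta p) * z₁ + conj (coordAlpha p) * z₂ := by
  simp only [formB, add_apply, smul_apply, coe_comp, Function.comp_apply, smul_eq_mul]
  simp only [ContinuousLinearEquiv.coe_coe, conjCLE_apply]
  ring

lemma coordAlpha_fieldE2 (p : Fin 4 → ℝ) : coordAlpha (fieldE2 p) = -conj (coordBeta p) := by
  simp [fieldE2, Complex.ext_iff]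

lemma coordBeta_fieldE2 (p : Fin 4 → ℝ) : coordBeta (fieldE2 p) = conj (coordAlpha p) := by
  simp [fieldE2]

lemma coordAlpha_fieldE3 (p : Fin 4 → ℝ) : coordAlpha (fieldE3 p) = -I * conj (coordBeta p) := by
  simp [fieldE3, Complex.ext_iff]

lemma coordBeta_fieldE3 (p : Fin 4 → ℝ) : coordBeta (fieldE3 p) = I * conj (coordAlpha p) := by
  simp [fieldE3, Complex.ext_iff]

lemma formA_fieldE2 (z₁ z₂ : ℂ) (p : Fin 4 → ℝ) : formA z₁ z₂ (fieldE2 p) = formB z₁ z₂ p := by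
  rw [formA_apply, formB_apply, coordAlpha_fieldE2, coordBeta_fieldE2]

lemma formB_fieldE2 (z₁ z₂ : ℂ) (p : Fin 4 → ℝ) : formB z₁ z₂ (fieldE2 p) = -formA z₁ z₂ p := by
  rw [formA_apply, formB_apply, coordAlpha_fieldE2, coordBeta_fieldE2]
  simp only [map_neg, conj_conj]
  ring

lemma formA_fieldE3 (z₁ z₂ : ℂ) (p : Fin 4 → ℝ) : formA z₁ z₂ (fieldE3 p) = I * formB z₁ z₂ p := by
  rw [formA_apply, formB_apply, coordAlpha_fieldE3, coordBeta_fieldE3]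
  ring

lemma formB_fieldE3 (z₁ z₂ : ℂ) (p : Fin 4 → ℝ) : formB z₁ z₂ (fieldE3 p) = I * formA z₁ z₂ p := by
  rw [formA_apply, formB_apply, coordAlpha_fieldE3, coordBeta_fieldE3]
  simp only [map_neg, map_mul, conj_conj, conj_I]
  ring

lemma Fkm_natCast {k n : ℕ} (h : n ≤ k) (z₁ z₂ : ℂ) :
    Fkm k n z₁ z₂ = fun p => formA z₁ z₂ p ^ n * formB z₁ z₂ p ^ (k - n) := by
  ext p
  rw [Fkm, if_pos ⟨n.cast_nonneg, by exact_mod_cast h⟩, formA_apply, formB_apply,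
    coordAlpha_apply, coordBeta_apply, Int.toNat_natCast]

-- The factors `n` and `k - n` kill the boundary cases, where `Fkm` is `0` by convention but the
-- natural-number exponents on the right are truncated.
lemma natCast_mul_Fkm_natCast_sub_one {k n : ℕ} (h : n ≤ k) (z₁ z₂ : ℂ) (p : Fin 4 → ℝ) :
    (n : ℂ) * Fkm k ((n : ℤ) - 1) z₁ z₂ p
      = n * (formA z₁ z₂ p ^ (n - 1) * formB z₁ z₂ p ^ (k - n + 1)) := by
  rcases n with _ | n
  · simp
  · rw [show ((n + 1 : ℕ) : ℤ) - 1 = n by omega, Fkm_natCast (by omega), Nat.add_sub_cancel,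
      show k - (n + 1) + 1 = k - n by omega]

lemma sub_mul_Fkm_natCast_add_one {k n : ℕ} (h : n ≤ k) (z₁ z₂ : ℂ) (p : Fin 4 → ℝ) :
    ((k : ℂ) - n) * Fkm k ((n : ℤ) + 1) z₁ z₂ p
      = (k - n) * (formA z₁ z₂ p ^ (n + 1) * formB z₁ z₂ p ^ (k - n - 1)) := by
  rcases h.eq_or_lt with rfl | hlt
  · simp
  · rw [← Nat.cast_succ, Fkm_natCast hlt, Nat.sub_sub]

/-- the raising/lowering relations
`∇_{e₂} F_k^m = m·F_k^{m-1} - (k-m)·F_k^{m+1}` and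
`∇_{e₃} F_k^m = im·F_k^{m-1} + i(k-m)·F_k^{m+1}`
(with the convention `F_k^{-1} = F_k^{k+1} = 0`, built into `Fkm`). -/
theorem stmt_10 (k : ℕ) (m : ℤ) (hm0 : 0 ≤ m) (hmk : m ≤ (k : ℤ)) (z₁ z₂ : ℂ)
    (p : Fin 4 → ℝ) :
    fderiv ℝ (Fkm k m z₁ z₂) p (fieldE2 p)
        = (m : ℂ) * Fkm k (m - 1) z₁ z₂ p
          - ((k : ℂ) - (m : ℂ)) * Fkm k (m + 1) z₁ z₂ p ∧
    fderiv ℝ (Fkm k m z₁ z₂) p (fieldE3 p)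
        = Complex.I * (m : ℂ) * Fkm k (m - 1) z₁ z₂ p
          + Complex.I * ((k : ℂ) - (m : ℂ)) * Fkm k (m + 1) z₁ z₂ p := by
  lift m to ℕ using hm0 with n
  have hnk : n ≤ k := by exact_mod_cast hmk
  have hlow := natCast_mul_Fkm_natCast_sub_one hnk z₁ z₂ p
  have hhigh := sub_mul_Fkm_natCast_add_one hnk z₁ z₂ p
  rw [Fkm_natCast hnk, Int.cast_natCast]
  constructor
  · rw [fderiv_clm_pow_mul_clm_pow_apply_of_swap _ _ _ _ _ _ 1 (-1)
      (by rw [formA_fieldE2, one_mul]) (by rw [formB_fieldE2, neg_one_mul]), Nat.cast_sub hnk]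
    linear_combination hhigh - hlow
  · rw [fderiv_clm_pow_mul_clm_pow_apply_of_swap _ _ _ _ _ _ I I
      (formA_fieldE3 z₁ z₂ p) (formB_fieldE3 z₁ z₂ p), Nat.cast_sub hnk]
    linear_combination -I * hlow - I * hhigh
end
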